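/- Let n inspection stations have nonnegative inspection costs c : Fin n → ℝ, nonnegative inspection times t : Fin n → ℝ, and pass probabilities p : Fin n → ℝ with 0 ≤ p i < 1, q i = 1 - p i. Fix weights w₁, w₂ ≥ 0. For a permutation ρ of Fin n define the weighted fitness f(ρ) = Σ_{i : Fin n} (w₁·c(ρ(i)) + w₂·t(ρ(i))) · ∏_{j < i} p(ρ(j)). If σ is a permutation such that the ratios (w₁·c(σ(i)) + w₂·t(σ(i)))/q(σ(i)) are nondecreasing in i, then for every permutation τ of Fin n, f(σ) ≤ f(τ). -/

import Mathlib

/-!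
Write `b` for the weighted cost `w₁ c + w₂ t` and `r` for the pass probability `p`. Along a
sequence `a :: l` the fitness satisfies `f (a :: l) = b a + r a * f l`, so exchanging two adjacent
stations `a, x` changes it by `b a (1 - r x) - b x (1 - r a)`, which is `≤ 0` when `a` has the
smaller ratio `b / (1 - r)`. Hence a station of minimal ratio can be moved to the front without
increasing the fitness, and induction on the sequence shows that the ratio-sorted sequence is
optimal among all its rearrangements.
-/

/-- Weighted fitness (weighted combination of expected cost and expected time) of a series
inspection system under inspection sequence `ρ`. -/
noncomputable def weightedFitness {n : ℕ} (w₁ w₂ : ℝ) (c t p : Fin n → ℝ)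
    (ρ : Equiv.Perm (Fin n)) : ℝ :=
  ∑ i : Fin n, (w₁ * c (ρ i) + w₂ * t (ρ i)) * ∏ j ∈ Finset.Iio i, p (ρ j)

open Finset

theorem Fin.prod_Iio_succ {M : Type*} [CommMonoid M] {n : ℕ} (f : Fin (n + 1) → M)
    (i : Fin n) : ∏ j ∈ Iio i.succ, f j = f 0 * ∏ j ∈ Iio i, f j.succ := by
  rw [← Ico_bot, bot_eq_zero, ← Ioo_insert_left (Fin.succ_pos i), prod_insert (by simp),
    ← Fin.map_succEmb_Iio, prod_map]
  rfl

namespace SeriesInspection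

variable {α : Type*} (b r : α → ℝ)

noncomputable def cost : List α → ℝ
  | [] => 0
  | a :: l => b a + r a * cost l

@[simp]
theorem cost_nil : cost b r [] = 0 := rfl

@[simp]
theorem cost_cons (a : α) (l : List α) : cost b r (a :: l) = b a + r a * cost b r l := rfl

theorem sum_mul_prod_Iio_eq_cost_ofFn {n : ℕ} (f : Fin n → α) :
    ∑ i : Fin n, b (f i) * ∏ j ∈ Iio i, r (f j) = cost b r (List.ofFn f) := by
  induction n with
  | zero => simp
  | succ n ih =>
    rw [Fin.sum_univ_succ, List.ofFn_succ, cost_cons, ← ih, mul_sum]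
    congr 1
    · rw [← bot_eq_zero, Iio_bot, prod_empty, mul_one]
    · exact sum_congr rfl fun i _ => by rw [Fin.prod_Iio_succ]; ring

variable {b r}

theorem cost_cons_cons_le_swap {a x : α} (hra : r a < 1) (hrx : r x < 1)
    (hax : b a / (1 - r a) ≤ b x / (1 - r x)) (l : List α) :
    cost b r (a :: x :: l) ≤ cost b r (x :: a :: l) := by
  have hcross : b a * (1 - r x) ≤ b x * (1 - r a) :=
    (div_le_div_iff₀ (sub_pos.2 hra) (sub_pos.2 hrx)).1 hax
  simp only [cost_cons]
  nlinarith

theorem cost_cons_append_le (hr : ∀ x, 0 ≤ r x) (hr1 : ∀ x, r x < 1) {a : α} (l₁ l₂ : List α)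
    (ha : ∀ x ∈ l₁, b a / (1 - r a) ≤ b x / (1 - r x)) :
    cost b r (a :: (l₁ ++ l₂)) ≤ cost b r (l₁ ++ a :: l₂) := by
  induction l₁ with
  | nil => rfl
  | cons x l₁ ih =>
    calc cost b r (a :: x :: (l₁ ++ l₂))
        ≤ cost b r (x :: a :: (l₁ ++ l₂)) :=
          cost_cons_cons_le_swap (hr1 a) (hr1 x) (ha x (by simp)) _
      _ ≤ cost b r (x :: (l₁ ++ a :: l₂)) := by
          simp only [cost_cons]
          gcongr
          · exact hr x
          · exact ih fun y hy => ha y (by simp [hy])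

theorem cost_le_of_perm (hr : ∀ x, 0 ≤ r x) (hr1 : ∀ x, r x < 1) {m l : List α}
    (hm : m.Pairwise fun x y => b x / (1 - r x) ≤ b y / (1 - r y)) (hml : m.Perm l) :
    cost b r m ≤ cost b r l := by
  induction m generalizing l with
  | nil => simp [List.nil_perm.1 hml]
  | cons a m ih =>
    rw [List.pairwise_cons] at hm
    obtain ⟨l₁, l₂, rfl⟩ := List.append_of_mem (hml.subset List.mem_cons_self)
    have hperm : m.Perm (l₁ ++ l₂) := (hml.trans List.perm_middle).cons_inv
    calc cost b r (a :: m)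
        ≤ cost b r (a :: (l₁ ++ l₂)) := by
          simp only [cost_cons]
          gcongr
          · exact hr a
          · exact ih hm.2 hperm
      _ ≤ cost b r (l₁ ++ a :: l₂) :=
          cost_cons_append_le hr hr1 l₁ l₂ fun x hx =>
            hm.1 x (hperm.symm.subset (List.mem_append_left l₂ hx))

end SeriesInspection

theorem Equiv.Perm.ofFn_perm_ofFn {n : ℕ} (σ τ : Equiv.Perm (Fin n)) :
    (List.ofFn σ).Perm (List.ofFn τ) := by
  rw [List.perm_ext_iff_of_nodup (List.nodup_ofFn.2 σ.injective)
    (List.nodup_ofFn.2 τ.injective)]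
  simp [List.mem_ofFn']

theorem weighted_series_ratio_sequence_optimal_general {n : ℕ} (c t p q : Fin n → ℝ)
    (w₁ w₂ : ℝ)
    (hp : ∀ i, 0 ≤ p i) (hp1 : ∀ i, p i < 1) (hq : ∀ i, q i = 1 - p i)
    (σ : Equiv.Perm (Fin n))
    (hσ : ∀ i k : Fin n, i ≤ k →
      (w₁ * c (σ i) + w₂ * t (σ i)) / q (σ i) ≤
        (w₁ * c (σ k) + w₂ * t (σ k)) / q (σ k)) :
    ∀ τ : Equiv.Perm (Fin n),
      weightedFitness w₁ w₂ c t p σ ≤ weightedFitness w₁ w₂ c t p τ := by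
  intro τ
  let b : Fin n → ℝ := fun i => w₁ * c i + w₂ * t i
  have hsorted : (List.ofFn σ).Pairwise fun x y => b x / (1 - p x) ≤ b y / (1 - p y) := by
    rw [List.pairwise_ofFn]
    intro i k hik
    simpa only [hq] using hσ i k hik.le
  simp only [weightedFitness]
  rw [SeriesInspection.sum_mul_prod_Iio_eq_cost_ofFn b p σ,
    SeriesInspection.sum_mul_prod_Iio_eq_cost_ofFn b p τ]
  exact SeriesInspection.cost_le_of_perm hp hp1 hsorted (Equiv.Perm.ofFn_perm_ofFn σ τ)

/-- If the ratios `(w₁ * c (σ i) + w₂ * t (σ i)) / q (σ i)` are nondecreasing along the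
sequence `σ`, then `σ` minimizes the weighted fitness of the series system. -/
theorem weighted_series_ratio_sequence_optimal {n : ℕ} (c t p q : Fin n → ℝ)
    (w₁ w₂ : ℝ) (hw₁ : 0 ≤ w₁) (hw₂ : 0 ≤ w₂)
    (hc : ∀ i, 0 ≤ c i) (ht : ∀ i, 0 ≤ t i)
    (hp : ∀ i, 0 ≤ p i) (hp1 : ∀ i, p i < 1) (hq : ∀ i, q i = 1 - p i)
    (σ : Equiv.Perm (Fin n))
    (hσ : ∀ i k : Fin n, i ≤ k →
      (w₁ * c (σ i) + w₂ * t (σ i)) / q (σ i) ≤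
        (w₁ * c (σ k) + w₂ * t (σ k)) / q (σ k)) :
    ∀ τ : Equiv.Perm (Fin n),
      weightedFitness w₁ w₂ c t p σ ≤ weightedFitness w₁ w₂ c t p τ :=
  weighted_series_ratio_sequence_optimal_general c t p q w₁ w₂ hp hp1 hq σ hσ
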